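/- Let R be a (left) nearfield which is not distributive, i.e. there exist α, β, λ ∈ R with (α+β)·λ ≠ α·λ + β·λ, and let n be a positive integer. For any v ∈ R^n, span({v}) = { x ∈ R^n : x_j = 0 for every coordinate j with v_j = 0 }. In particular, span({v}) is the direct sum of the coordinate lines e_j·R over the coordinates j where v_j ≠ 0, so span({v}) is k-dimensional if and only if v has exactly k nonzero entries. -/

import Mathlib

/-- A (left) nearfield: `(R,+)` is an abelian group, multiplication is associative
with identity `1 ≠ 0`, every nonzero element has a two-sided inverse,
`0` multiplies to `0` on both sides, and the left distributive law holds. -/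
class Nearfield (R : Type*) extends AddCommGroup R, One R, Mul R where
  mul_assoc : ∀ a b c : R, a * b * c = a * (b * c)
  one_mul : ∀ a : R, 1 * a = a
  mul_one : ∀ a : R, a * 1 = a
  one_ne_zero : (1 : R) ≠ 0
  zero_mul : ∀ a : R, 0 * a = 0
  mul_zero : ∀ a : R, a * 0 = 0
  left_distrib : ∀ a b c : R, a * (b + c) = a * b + a * c
  exists_inv : ∀ a : R, a ≠ 0 → ∃ b : R, a * b = 1 ∧ b * a = 1

variable {R : Type*} [Nearfield R] {n : ℕ}

/-- Right scalar multiplication on `R^n`: `(x · r) j = x j * r`. -/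
def vsmul (x : Fin n → R) (r : R) : Fin n → R := fun j => x j * r

/-- An `R`-subgroup of `R^n`: an additive subgroup closed under right scalar
multiplication. -/
def IsRSubgroup (S : Set (Fin n → R)) : Prop :=
  (0 : Fin n → R) ∈ S ∧ (∀ x ∈ S, ∀ y ∈ S, x + y ∈ S) ∧ (∀ x ∈ S, -x ∈ S) ∧
    ∀ x ∈ S, ∀ r : R, vsmul x r ∈ S

/-- `nvGen V` is the smallest `R`-subgroup of `R^n` containing `V`
(the intersection of all `R`-subgroups containing `V`). -/
def nvGen (V : Set (Fin n → R)) : Set (Fin n → R) :=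
  { x | ∀ S : Set (Fin n → R), IsRSubgroup S → V ⊆ S → x ∈ S }

/-- A subspace of `R^n`: an additive subgroup `N` with `(x+y)·r − x·r ∈ N`
for all `x ∈ R^n`, `y ∈ N`, `r ∈ R`. -/
def IsSubspace (N : Set (Fin n → R)) : Prop :=
  (0 : Fin n → R) ∈ N ∧ (∀ x ∈ N, ∀ y ∈ N, x + y ∈ N) ∧ (∀ x ∈ N, -x ∈ N) ∧
    ∀ x : Fin n → R, ∀ y ∈ N, ∀ r : R, vsmul (x + y) r - vsmul x r ∈ N

/-- `nvSpan V` is the smallest subspace of `R^n` containing `V`. -/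
def nvSpan (V : Set (Fin n → R)) : Set (Fin n → R) :=
  { x | ∀ N : Set (Fin n → R), IsSubspace N → V ⊆ N → x ∈ N }

/-- `nvLC V 0 = V` and `nvLC V (m+1)` is the set of all finite right `R`-linear
combinations of elements of `nvLC V m`. -/
def nvLC (V : Set (Fin n → R)) : ℕ → Set (Fin n → R)
  | 0 => V
  | m + 1 => { x | ∃ F : Finset (Fin n → R), ↑F ⊆ nvLC V m ∧
      ∃ lam : (Fin n → R) → R, x = ∑ w ∈ F, vsmul w (lam w) }

/-!
The defect `(x + w)·λ − x·λ − w·λ` of a subspace element `w` lies in the subspace, and it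
vanishes in every coordinate where `x` does. Taking `x = e_j·(w_j α)` and a witness
`(α + 1)·λ ≠ α·λ + λ` of non-distributivity, the defect is `e_j·(w_j c)` with `c ≠ 0`, so every
subspace containing `w` contains the whole line `e_j·R` as soon as `w_j ≠ 0`. Hence `span({v})`
contains every vector supported on the support of `v`; conversely those vectors form a subspace.
-/

namespace Nearfield

theorem mul_neg (a b : R) : a * -b = -(a * b) :=
  (neg_eq_of_add_eq_zero_right <| by
    rw [← left_distrib, add_neg_cancel, mul_zero]).symm

theorem mul_sub (a b c : R) : a * (b - c) = a * b - a * c := by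
  rw [sub_eq_add_neg, left_distrib, mul_neg, ← sub_eq_add_neg]

/-- Writing `α + β = β(β⁻¹α + 1)` moves any failure of right distributivity to one with `β = 1`. -/
theorem exists_add_one_mul_ne (hd : ∃ α β lam : R, (α + β) * lam ≠ α * lam + β * lam) :
    ∃ a l : R, (a + 1) * l ≠ a * l + l := by
  by_contra! h
  obtain ⟨α, β, lam, hne⟩ := hd
  apply hne
  rcases eq_or_ne β 0 with rfl | hβ
  · rw [add_zero, zero_mul, add_zero]
  obtain ⟨b, hβb, -⟩ := exists_inv β hβ
  have hsplit : α + β = β * (b * α + 1) := by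
    rw [left_distrib, mul_one, ← mul_assoc, hβb, one_mul, add_comm]
  rw [hsplit, mul_assoc, h (b * α) lam, left_distrib, ← mul_assoc, ← mul_assoc, hβb, one_mul]

end Nearfield

theorem vsmul_zero_left (r : R) : vsmul (0 : Fin n → R) r = 0 :=
  funext fun _ => Nearfield.zero_mul r

theorem vsmul_single (j : Fin n) (a r : R) : vsmul (Pi.single j a) r = Pi.single j (a * r) := by
  funext i
  rcases eq_or_ne i j with rfl | hij
  · simp only [vsmul, Pi.single_eq_same]
  · simp only [vsmul, Pi.single_eq_of_ne hij, Nearfield.zero_mul]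

theorem sum_vsmul_basis (r : Fin n → R) :
    ∑ j, vsmul (fun i => if i = j then (1 : R) else 0) (r j) = r := by
  have hbasis (j : Fin n) : (fun i => if i = j then (1 : R) else 0) = Pi.single j 1 := by
    funext i
    rw [Pi.single_apply]
  simp only [hbasis, vsmul_single, Nearfield.one_mul, Finset.univ_sum_single]

namespace IsSubspace

variable {N : Set (Fin n → R)}

theorem vsmul_mem (hN : IsSubspace N) {y : Fin n → R} (hy : y ∈ N) (r : R) : vsmul y r ∈ N := by
  simpa only [zero_add, vsmul_zero_left, sub_zero] using hN.2.2.2 0 y hy r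

theorem sub_mem (hN : IsSubspace N) {x y : Fin n → R} (hx : x ∈ N) (hy : y ∈ N) : x - y ∈ N := by
  rw [sub_eq_add_neg]
  exact hN.2.1 x hx _ (hN.2.2.1 y hy)

theorem sum_mem (hN : IsSubspace N) {ι : Type*} (s : Finset ι) {f : ι → Fin n → R}
    (hf : ∀ i ∈ s, f i ∈ N) : ∑ i ∈ s, f i ∈ N :=
  Finset.sum_induction f (· ∈ N) (fun a b ha hb => hN.2.1 a ha b hb) hN.1 hf

theorem single_apply_mem (hd : ∃ α β lam : R, (α + β) * lam ≠ α * lam + β * lam)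
    (hN : IsSubspace N) {w : Fin n → R} (hw : w ∈ N) (j : Fin n) : Pi.single j (w j) ∈ N := by
  obtain ⟨a, l, hal⟩ := Nearfield.exists_add_one_mul_ne hd
  set c : R := (a + 1) * l - a * l - l
  have hc : c ≠ 0 := fun h => hal (by rw [← sub_eq_zero, ← sub_sub]; exact h)
  obtain ⟨c', hcc', -⟩ := Nearfield.exists_inv c hc
  set x : Fin n → R := Pi.single j (w j * a)
  have hdefect : vsmul (x + w) l - vsmul x l - vsmul w l = Pi.single j (w j * c) := by
    funext i
    rcases eq_or_ne i j with rfl | hij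
    · simp only [x, vsmul, Pi.sub_apply, Pi.add_apply, Pi.single_eq_same]
      have hfactor : w i * a + w i = w i * (a + 1) := by
        rw [Nearfield.left_distrib, Nearfield.mul_one]
      rw [hfactor, Nearfield.mul_assoc, Nearfield.mul_assoc, ← Nearfield.mul_sub,
        ← Nearfield.mul_sub]
    · simp only [x, vsmul, Pi.sub_apply, Pi.add_apply, Pi.single_eq_of_ne hij, zero_add,
        Nearfield.zero_mul, sub_zero, sub_self]
  have hmem := hN.vsmul_mem (hN.sub_mem (hN.2.2.2 x w hw l) (hN.vsmul_mem hw l)) c'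
  rwa [hdefect, vsmul_single, Nearfield.mul_assoc, hcc', Nearfield.mul_one] at hmem

theorem single_mem (hd : ∃ α β lam : R, (α + β) * lam ≠ α * lam + β * lam)
    (hN : IsSubspace N) {w : Fin n → R} (hw : w ∈ N) {j : Fin n} (hj : w j ≠ 0) (r : R) :
    Pi.single j r ∈ N := by
  obtain ⟨b, hwb, -⟩ := Nearfield.exists_inv (w j) hj
  have hmem := hN.vsmul_mem (hN.single_apply_mem hd hw j) (b * r)
  rwa [vsmul_single, ← Nearfield.mul_assoc, hwb, Nearfield.one_mul] at hmem

end IsSubspace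

theorem isSubspace_setOf_support_subset (v : Fin n → R) :
    IsSubspace {x : Fin n → R | ∀ j, v j = 0 → x j = 0} := by
  refine ⟨fun _ _ => rfl, ?_, ?_, ?_⟩
  · intro x hx y hy j hj
    simp only [Pi.add_apply, hx j hj, hy j hj, add_zero]
  · intro x hx j hj
    simp only [Pi.neg_apply, hx j hj, neg_zero]
  · intro x y hy r j hj
    simp only [vsmul, Pi.sub_apply, Pi.add_apply, hy j hj, add_zero, sub_self]

theorem nvSpan_subset {V N : Set (Fin n → R)} (hN : IsSubspace N) (hVN : V ⊆ N) :
    nvSpan V ⊆ N :=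
  fun _ hx => hx N hN hVN

theorem nvSpan_singleton (hd : ∃ α β lam : R, (α + β) * lam ≠ α * lam + β * lam)
    (v : Fin n → R) : nvSpan {v} = {x : Fin n → R | ∀ j, v j = 0 → x j = 0} := by
  refine (nvSpan_subset (isSubspace_setOf_support_subset v)
    (Set.singleton_subset_iff.mpr fun _ => id)).antisymm ?_
  intro x hx N hN hvN
  rw [← Finset.univ_sum_single x]
  refine hN.sum_mem _ fun j _ => ?_
  by_cases hvj : v j = 0
  · rw [hx j hvj, Pi.single_zero]
    exact hN.1
  · exact hN.single_mem hd (hvN rfl) hvj (x j)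

theorem span_singleton_support_general
    (hd : ∃ α β lam : R, (α + β) * lam ≠ α * lam + β * lam)
    (v : Fin n → R) :
    nvSpan {v} = { x : Fin n → R | ∀ j, v j = 0 → x j = 0 } ∧
    ∀ x ∈ nvSpan {v}, ∃! r : Fin n → R,
      (∀ j, v j = 0 → r j = 0) ∧
      x = ∑ j, vsmul (fun i => if i = j then (1 : R) else 0) (r j) := by
  rw [nvSpan_singleton hd v]
  refine ⟨rfl, fun x hx => ⟨x, ⟨hx, (sum_vsmul_basis x).symm⟩, ?_⟩⟩
  rintro r ⟨-, hxr⟩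
  rw [hxr, sum_vsmul_basis]

/-- in a non-distributive nearfield, `span({v})` consists exactly
of the vectors supported on the support of `v`; moreover every element of
`span({v})` is a unique right linear combination of the coordinate vectors `e_j`
with `v_j ≠ 0` (so `span({v})` is the direct sum of the lines `e_j·R` over the
support of `v`, and its dimension is the number of nonzero entries of `v`). -/
theorem span_singleton_support
    (hd : ∃ α β lam : R, (α + β) * lam ≠ α * lam + β * lam)
    (hn : 0 < n) (v : Fin n → R) :
    nvSpan {v} = { x : Fin n → R | ∀ j, v j = 0 → x j = 0 } ∧
    ∀ x ∈ nvSpan {v}, ∃! r : Fin n → R,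
      (∀ j, v j = 0 → r j = 0) ∧
      x = ∑ j, vsmul (fun i => if i = j then (1 : R) else 0) (r j) :=
  span_singleton_support_general hd v
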